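/- arXiv:2411.02865 — 8 statements merged into one kernel-verified Lean document; each statement's English description precedes it below -/
import Mathlib

section
/- Let α ∈ (0,1], let p, q be real numbers with 0 < p < q, and let τ ≥ 0. Then there exists a real λ > 0 such that λ^α = -p + q·exp(-λ·τ), where λ^α denotes the real power (rpow). Consequently the characteristic equation of the fractional Mackey–Glass equation linearized at the equilibrium x₁* = 0 has a real positive root for every delay, so x₁* is unstable for all τ ≥ 0. -/
/-- The characteristic equation λ^α = -p + q e^{-λτ} of the fractional Mackey–Glass
equation linearized at x₁* = 0 has a real positive root for every delay τ ≥ 0. -/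
theorem fractional_mackey_glass_zero_equilibrium_unstable (α p q τ : ℝ)
    (hα0 : 0 < α) (hα1 : α ≤ 1) (hp : 0 < p) (hpq : p < q) (hτ : 0 ≤ τ) :
    ∃ lam : ℝ, 0 < lam ∧ lam ^ α = -p + q * Real.exp (-lam * τ) := by
  have hq : 0 < q := hp.trans hpq
  set f : ℝ → ℝ := fun x => x ^ α + p - q * Real.exp (-x * τ) with hf
  set M : ℝ := q ^ α⁻¹ with hM
  have hM0 : 0 < M := Real.rpow_pos_of_pos hq _
  have hMα : M ^ α = q := Real.rpow_inv_rpow hq.le (ne_of_gt hα0)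
  have hcont : ContinuousOn f (Set.Icc 0 M) := by
    apply ContinuousOn.sub
    · apply ContinuousOn.add _ continuousOn_const
      intro x hx
      exact (Real.continuousAt_rpow_const x α (Or.inr hα0.le)).continuousWithinAt
    · exact (continuous_const.mul ((continuous_neg.mul continuous_const).rexp)).continuousOn
  have hf0 : f 0 < 0 := by
    simp only [hf]
    rw [Real.zero_rpow (ne_of_gt hα0)]
    simp [Real.exp_eq_one_iff]
    linarith
  have hfM : 0 < f M := by
    have h1 : Real.exp (-M * τ) ≤ 1 := by
      apply Real.exp_le_one_iff.mpr
      have := mul_nonneg hM0.le hτ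
      linarith
    have : q * Real.exp (-M * τ) ≤ q := by nlinarith
    simp only [hf]
    rw [hMα]
    linarith
  have := intermediate_value_Ioc hM0.le hcont
  have h0mem : (0 : ℝ) ∈ Set.Ioc (f 0) (f M) := ⟨hf0, hfM.le⟩
  obtain ⟨c, hc, hfc⟩ := this h0mem
  refine ⟨c, hc.1, ?_⟩
  simp only [hf] at hfc
  linarith
end

section
/- Let α ∈ (0,1], let p, q, r be real numbers with 0 < p < q, 0 < r and p/q > 1 - 2/r, and set β = p + (p-q)*r*p/q. Then for every τ ≥ 0 and every complex number λ with Re λ ≥ 0 one has λ^α ≠ -p + β·exp(-λ·τ), where λ^α denotes the principal complex power (Complex.cpow). Hence the characteristic equation of the fractional Mackey–Glass equation linearized at x₂* has no root with nonnegative real part for any delay. -/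
/-- When p/q > 1 - 2/r, the characteristic equation λ^α = -p + β e^{-λτ} of the
fractional Mackey–Glass equation linearized at x₂* has no root with nonnegative
real part for any delay τ ≥ 0. -/
theorem fractional_mackey_glass_x2_stable (α p q r : ℝ)
    (hα0 : 0 < α) (hα1 : α ≤ 1) (hp : 0 < p) (hpq : p < q) (hr : 0 < r)
    (hcond : p / q > 1 - 2 / r) :
    ∀ τ : ℝ, 0 ≤ τ → ∀ lam : ℂ, 0 ≤ lam.re →
      lam ^ (α : ℂ) ≠ (-p : ℂ) +
        ((p + (p - q) * r * p / q : ℝ) : ℂ) * Complex.exp (-lam * (τ : ℂ)) := by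
  intro τ hτ lam hre heq
  set β : ℝ := p + (p - q) * r * p / q with hβ
  have hq : 0 < q := hp.trans hpq
  -- from hcond: r*(q-p) < 2*q
  have h2 : r * (q - p) < 2 * q := by
    have key : (1 - 2 / r) * (q * r) < p / q * (q * r) :=
      mul_lt_mul_of_pos_right hcond (mul_pos hq hr)
    have l1 : (1 - 2 / r) * (q * r) = q * r - 2 * q := by field_simp
    have l2 : p / q * (q * r) = p * r := by field_simp
    nlinarith [key]
  have hβlt : |β| < p := by
    rw [abs_lt, hβ]
    constructor
    · have h3 : (-2 : ℝ) * p < (p - q) * r * p / q := by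
        rw [lt_div_iff₀ hq]
        nlinarith [mul_lt_mul_of_pos_left h2 hp]
      linarith
    · have : (p - q) * r * p / q < 0 :=
        div_neg_of_neg_of_pos (by nlinarith [mul_pos (mul_pos (sub_pos.mpr hpq) hr) hp]) hq
      linarith
  -- Re of RHS < 0
  have hR : ((-p : ℂ) + (β : ℂ) * Complex.exp (-lam * (τ : ℂ))).re < 0 := by
    have hexpre : (Complex.exp (-lam * (τ:ℂ))).re =
        Real.exp (-(lam.re) * τ) * Real.cos (-(lam.im) * τ) := by
      rw [Complex.exp_re]; congr 1 <;> simp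
    have he1 : Real.exp (-(lam.re) * τ) ≤ 1 :=
      Real.exp_le_one_iff.mpr (by nlinarith)
    have he0 : 0 < Real.exp (-(lam.re) * τ) := Real.exp_pos _
    have hc : |Real.cos (-(lam.im) * τ)| ≤ 1 := Real.abs_cos_le_one _
    have habs : |β * (Complex.exp (-lam * (τ:ℂ))).re| < p := by
      rw [hexpre, abs_mul, abs_mul]
      calc |β| * (|Real.exp (-(lam.re) * τ)| * |Real.cos (-(lam.im) * τ)|)
          ≤ |β| * 1 := by
            apply mul_le_mul_of_nonneg_left _ (abs_nonneg _)
            rw [abs_of_pos he0]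
            nlinarith [abs_nonneg (Real.cos (-(lam.im) * τ))]
        _ < p := by rwa [mul_one]
    have := abs_lt.mp habs
    simp only [Complex.add_re, Complex.mul_re, Complex.ofReal_re, Complex.ofReal_im,
      Complex.neg_re]
    have hβre : ((β:ℂ) * Complex.exp (-lam * (τ:ℂ))).re
        = β * (Complex.exp (-lam * (τ:ℂ))).re := by
      simp [Complex.mul_re]
    linarith [this.2]
  -- Re of LHS ≥ 0
  have hL : 0 ≤ (lam ^ (α : ℂ)).re := by
    rcases eq_or_ne lam 0 with h0 | h0
    · rw [h0, Complex.zero_cpow (by exact_mod_cast hα0.ne')]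
      simp
    · rw [Complex.cpow_def_of_ne_zero h0, Complex.exp_re]
      have him : (Complex.log lam * (α:ℂ)).im = lam.arg * α := by
        simp [Complex.mul_im, Complex.log_im]
      rw [him]
      have harg : |lam.arg| ≤ Real.pi / 2 :=
        Complex.abs_arg_le_pi_div_two_iff.mpr hre
      have hcos : 0 ≤ Real.cos (lam.arg * α) := by
        apply Real.cos_nonneg_of_mem_Icc
        constructor
        · rcases abs_le.mp harg with ⟨h1, _⟩
          nlinarith [Real.pi_pos]
        · rcases abs_le.mp harg with ⟨_, h1⟩
          nlinarith [Real.pi_pos]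
      positivity
  rw [heq] at hL
  linarith
end

section
/- Let α ∈ (0,1], let γ, β be real numbers with γ < 0 and |β| < -γ, and let τ ≥ 0. Then for every complex number λ with Re λ ≥ 0 one has λ^α ≠ γ + β·exp(-λ·τ), where λ^α denotes the principal complex power (Complex.cpow). -/
/-- For the linear FDDE D^α x = γ x(t) + β x(t-τ) with γ < 0 and |β| < -γ,
the characteristic equation λ^α = γ + β e^{-λτ} has no root with nonnegative
real part for any delay τ ≥ 0. -/
theorem fdde_stable_all_delays (α γ β τ : ℝ)
    (hα0 : 0 < α) (hα1 : α ≤ 1) (hγ : γ < 0) (hβ : |β| < -γ) (hτ : 0 ≤ τ) :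
    ∀ lam : ℂ, 0 ≤ lam.re →
      lam ^ (α : ℂ) ≠ (γ : ℂ) + (β : ℂ) * Complex.exp (-lam * (τ : ℂ)) := by
  intro lam hre heq
  -- Real part of RHS is negative
  have hrhs : ((γ : ℂ) + (β : ℂ) * Complex.exp (-lam * (τ : ℂ))).re < 0 := by
    have habs : ‖Complex.exp (-lam * (τ : ℂ))‖ ≤ 1 := by
      rw [Complex.norm_exp]
      apply Real.exp_le_one_iff.mpr
      simp only [Complex.mul_re, Complex.neg_re, Complex.neg_im, Complex.ofReal_re,
        Complex.ofReal_im, mul_zero, sub_zero]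
      nlinarith
    have hre' : |(Complex.exp (-lam * (τ : ℂ))).re| ≤ 1 :=
      le_trans (Complex.abs_re_le_norm _) habs
    have : ((γ : ℂ) + (β : ℂ) * Complex.exp (-lam * (τ : ℂ))).re
        = γ + β * (Complex.exp (-lam * (τ : ℂ))).re := by
      simp [Complex.add_re, Complex.mul_re]
    rw [this]
    have h1 : β * (Complex.exp (-lam * (τ : ℂ))).re ≤ |β| := by
      calc β * (Complex.exp (-lam * (τ : ℂ))).re
          ≤ |β * (Complex.exp (-lam * (τ : ℂ))).re| := le_abs_self _
        _ = |β| * |(Complex.exp (-lam * (τ : ℂ))).re| := abs_mul _ _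
        _ ≤ |β| * 1 := mul_le_mul_of_nonneg_left hre' (abs_nonneg _)
        _ = |β| := mul_one _
    linarith
  -- Real part of LHS is nonnegative
  have hlhs : 0 ≤ (lam ^ (α : ℂ)).re := by
    rcases eq_or_ne lam 0 with h0 | h0
    · rw [h0, Complex.zero_cpow (by exact_mod_cast hα0.ne')]
      simp
    · rw [Complex.cpow_def_of_ne_zero h0, Complex.exp_re]
      have him : (Complex.log lam * (α : ℂ)).im = α * lam.arg := by
        simp [Complex.mul_im, Complex.log_im]; ring
      rw [him]
      apply mul_nonneg (Real.exp_nonneg _)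
      apply Real.cos_nonneg_of_mem_Icc
      have harg : |lam.arg| ≤ Real.pi / 2 := Complex.abs_arg_le_pi_div_two_iff.mpr hre
      rw [abs_le] at harg
      constructor
      · nlinarith [harg.1, harg.2, Real.pi_pos]
      · nlinarith [harg.1, harg.2, Real.pi_pos]
  rw [heq] at hlhs
  linarith
end

section
/- Let α ∈ (0,1], let p, q, r be real numbers with 0 < p < q, 0 < r and p/q < 1 - 2/r, and set β = p + (p-q)*r*p/q, θ = α·π/2, Ω = -p·cos θ + √(β² - p²·sin² θ), ω = Ω^(1/α) (real power), and τ* = arccos((Ω·cos θ + p)/β)/ω. Then Ω > 0, ω > 0, and the complex identity (I·ω)^α = -p + β·exp(-I·ω·τ*) holds, where (I·ω)^α denotes the principal complex power (Complex.cpow). Hence the characteristic equation of the fractional Mackey–Glass equation linearized at x₂* has the purely imaginary root i ω at the critical delay τ*. -/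
/-- When p/q < 1 - 2/r, the characteristic equation of the fractional Mackey–Glass
equation linearized at x₂* has the purely imaginary root i ω at the critical delay τ*. -/
theorem fractional_mackey_glass_hopf (α p q r : ℝ)
    (hα0 : 0 < α) (hα1 : α ≤ 1) (hp : 0 < p) (hpq : p < q) (hr : 0 < r)
    (hcond : p / q < 1 - 2 / r) :
    let β := p + (p - q) * r * p / q
    let θ := α * Real.pi / 2
    let Ω := -p * Real.cos θ + Real.sqrt (β ^ 2 - p ^ 2 * Real.sin θ ^ 2)
    let ω := Ω ^ (1 / α)
    let τs := Real.arccos ((Ω * Real.cos θ + p) / β) / ω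
    0 < Ω ∧ 0 < ω ∧
      (Complex.I * (ω : ℂ)) ^ (α : ℂ) =
        (-p : ℂ) + (β : ℂ) * Complex.exp (-(Complex.I * (ω : ℂ)) * (τs : ℂ)) := by
  intro β θ Ω ω τs
  have hβdef : β = p + (p - q) * r * p / q := rfl
  have hθdef : θ = α * Real.pi / 2 := rfl
  have hΩdef : Ω = -p * Real.cos θ + Real.sqrt (β ^ 2 - p ^ 2 * Real.sin θ ^ 2) := rfl
  have hωdef : ω = Ω ^ (1 / α) := rfl
  have hτdef : τs = Real.arccos ((Ω * Real.cos θ + p) / β) / ω := rfl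
  clear_value τs ω Ω θ β
  have hq : 0 < q := hp.trans hpq
  -- β < -p
  have h1 : p < (1 - 2/r) * q := by
    have := mul_lt_mul_of_pos_right hcond hq
    rwa [div_mul_cancel₀ _ hq.ne'] at this
  have h2 : p * r < q * r - 2 * q := by
    have := mul_lt_mul_of_pos_right h1 hr
    have h2q : 2 / r * r = 2 := div_mul_cancel₀ _ hr.ne'
    nlinarith
  have hβ : β < -p := by
    have h3 : (p - q) * r * p / q < -2 * p := by
      rw [div_lt_iff₀ hq]; nlinarith
    rw [hβdef]; linarith
  have hβ0 : β < 0 := by linarith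
  have hβp : p ^ 2 < β ^ 2 := by nlinarith
  -- trig bounds on θ
  have hθ0 : 0 < θ := by
    have := Real.pi_pos
    rw [hθdef]; positivity
  have hθle : θ ≤ Real.pi / 2 := by
    have := Real.pi_pos
    rw [hθdef]
    rw [div_le_div_iff₀ (by norm_num) (by norm_num)]
    nlinarith
  have hsinθ : 0 < Real.sin θ :=
    Real.sin_pos_of_pos_of_lt_pi hθ0 (lt_of_le_of_lt hθle (by linarith [Real.pi_pos]))
  have hcosθ : 0 ≤ Real.cos θ :=
    Real.cos_nonneg_of_mem_Icc ⟨by linarith [Real.pi_pos], hθle⟩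
  have hsc : Real.sin θ ^ 2 + Real.cos θ ^ 2 = 1 := Real.sin_sq_add_cos_sq θ
  -- the square root
  obtain ⟨D, hDdef⟩ : ∃ D, D = β ^ 2 - p ^ 2 * Real.sin θ ^ 2 := ⟨_, rfl⟩
  have hps : p ^ 2 * Real.sin θ ^ 2 + p ^ 2 * Real.cos θ ^ 2 = p ^ 2 := by
    linear_combination p ^ 2 * hsc
  have hcos2 : 0 ≤ p ^ 2 * Real.cos θ ^ 2 := by positivity
  have hD : 0 < D := by rw [hDdef]; linarith
  obtain ⟨E, hEdef⟩ : ∃ E, E = Real.sqrt D := ⟨_, rfl⟩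
  have hE0 : 0 ≤ E := by rw [hEdef]; exact Real.sqrt_nonneg _
  have hE2 : E ^ 2 = D := by rw [hEdef]; exact Real.sq_sqrt hD.le
  have hEp2 : p ^ 2 * Real.cos θ ^ 2 < E ^ 2 := by
    rw [hE2, hDdef]; linarith
  have hEgt : p * Real.cos θ < E := by nlinarith [hEp2, hE0, mul_nonneg hp.le hcosθ]
  have hΩE : Ω = -p * Real.cos θ + E := by rw [hΩdef, ← hDdef, ← hEdef]
  have hΩ : 0 < Ω := by rw [hΩE]; linarith
  have hω : 0 < ω := by rw [hωdef]; exact Real.rpow_pos_of_pos hΩ _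
  refine ⟨hΩ, hω, ?_⟩
  have hkey : Ω ^ 2 + 2 * p * Ω * Real.cos θ + p ^ 2 = β ^ 2 := by
    have hsum : Ω + p * Real.cos θ = E := by rw [hΩE]; ring
    have h : (Ω + p * Real.cos θ) ^ 2 = D := by rw [hsum, hE2]
    rw [hDdef] at h
    linear_combination h - p ^ 2 * hsc
  -- c and arccos
  obtain ⟨c, hcdef⟩ : ∃ c, c = (Ω * Real.cos θ + p) / β := ⟨_, rfl⟩
  have hcβ : c * β = Ω * Real.cos θ + p := by rw [hcdef]; exact div_mul_cancel₀ _ hβ0.ne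
  have hc2 : β ^ 2 * c ^ 2 = β ^ 2 - Ω ^ 2 * Real.sin θ ^ 2 := by
    linear_combination (c * β + Ω * Real.cos θ + p) * hcβ + hkey + Ω ^ 2 * hsc
  have hβ2 : 0 < β ^ 2 := by linarith [hβp, sq_nonneg p]
  have hΩs : 0 ≤ Ω ^ 2 * Real.sin θ ^ 2 := by positivity
  have hcsq : c ^ 2 ≤ 1 := by
    have h11 : β ^ 2 * c ^ 2 ≤ β ^ 2 * 1 := by rw [mul_one, hc2]; linarith
    exact (mul_le_mul_iff_right₀ hβ2).mp h11
  have habs : |c| ≤ 1 := (sq_le_one_iff_abs_le_one _).mp hcsq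
  have hc_le : c ≤ 1 := (abs_le.mp habs).2
  have hc_ge : -1 ≤ c := (abs_le.mp habs).1
  obtain ⟨A, hAdef⟩ : ∃ A, A = Real.arccos c := ⟨_, rfl⟩
  have hcosA : Real.cos A = c := by rw [hAdef]; exact Real.cos_arccos hc_ge hc_le
  have hsinA : Real.sin A = Real.sqrt (1 - c ^ 2) := by rw [hAdef]; exact Real.sin_arccos c
  have hωτ : ω * τs = A := by
    rw [hτdef, ← hcdef, ← hAdef, mul_div_cancel₀ _ hω.ne']
  -- imaginary part identity
  have hIm : Ω * Real.sin θ = -β * Real.sqrt (1 - c ^ 2) := by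
    have h9 : (Ω * Real.sin θ) ^ 2 = β ^ 2 * (1 - c ^ 2) := by linear_combination hc2
    have h10 : -β * Real.sqrt (1 - c ^ 2) = Real.sqrt (β ^ 2 * (1 - c ^ 2)) := by
      rw [Real.sqrt_mul (sq_nonneg β), Real.sqrt_sq_eq_abs, abs_of_neg hβ0]
    rw [h10, ← h9, Real.sqrt_sq (by positivity)]
  -- real part identity
  have hRe : Ω * Real.cos θ = -p + β * c := by
    have := hcβ; linarith [hcβ]
  -- ω ^ α = Ω
  have hωα : ω ^ α = Ω := by
    rw [hωdef, ← Real.rpow_mul hΩ.le, one_div, inv_mul_cancel₀ hα0.ne', Real.rpow_one]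
  -- complex computation
  have hzne : (Complex.I * (ω : ℂ)) ≠ 0 :=
    mul_ne_zero Complex.I_ne_zero (by exact_mod_cast hω.ne')
  have hlog : Complex.log (Complex.I * (ω : ℂ)) =
      (Real.log ω : ℂ) + ((Real.pi / 2 : ℝ) : ℂ) * Complex.I := by
    rw [mul_comm, Complex.log]
    rw [Complex.arg_real_mul _ hω, Complex.arg_I]
    congr 2
    simp [map_mul, Complex.norm_I, Complex.norm_real, abs_of_pos hω]
  have hL : (Complex.I * (ω : ℂ)) ^ (α : ℂ) =
      (Ω : ℂ) * ((Real.cos θ : ℂ) + (Real.sin θ : ℂ) * Complex.I) := by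
    rw [Complex.cpow_def_of_ne_zero hzne, hlog, add_mul, Complex.exp_add]
    have e1 : (Real.log ω : ℂ) * (α : ℂ) = ((α * Real.log ω : ℝ) : ℂ) := by
      push_cast; ring
    have e2 : ((Real.pi / 2 : ℝ) : ℂ) * Complex.I * (α : ℂ) = (θ : ℂ) * Complex.I := by
      rw [hθdef]; push_cast; ring
    have e3 : Real.exp (α * Real.log ω) = Ω := by
      rw [mul_comm, ← Real.rpow_def_of_pos hω, hωα]
    rw [e1, e2, Complex.exp_mul_I, ← Complex.ofReal_exp, e3, ← Complex.ofReal_cos,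
      ← Complex.ofReal_sin]
  have hτexp : -(Complex.I * (ω : ℂ)) * (τs : ℂ) = ((-A : ℝ) : ℂ) * Complex.I := by
    have h12 : (ω : ℂ) * (τs : ℂ) = (A : ℂ) := by rw [← Complex.ofReal_mul, hωτ]
    calc -(Complex.I * (ω : ℂ)) * (τs : ℂ)
        = -((ω : ℂ) * (τs : ℂ)) * Complex.I := by ring
      _ = ((-A : ℝ) : ℂ) * Complex.I := by rw [h12]; push_cast; ring
  have hR : Complex.exp (-(Complex.I * (ω : ℂ)) * (τs : ℂ)) =
      ((c : ℝ) : ℂ) - (Real.sqrt (1 - c ^ 2) : ℂ) * Complex.I := by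
    rw [hτexp, Complex.exp_mul_I, ← Complex.ofReal_cos, ← Complex.ofReal_sin,
      Real.cos_neg, Real.sin_neg, hcosA, hsinA]
    push_cast; ring
  rw [hL, hR]
  calc (Ω : ℂ) * ((Real.cos θ : ℂ) + (Real.sin θ : ℂ) * Complex.I)
      = ((Ω * Real.cos θ : ℝ) : ℂ) + ((Ω * Real.sin θ : ℝ) : ℂ) * Complex.I := by
        push_cast; ring
    _ = ((-p + β * c : ℝ) : ℂ) + ((-β * Real.sqrt (1 - c ^ 2) : ℝ) : ℂ) * Complex.I := by
        rw [hRe, hIm]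
    _ = (-p : ℂ) + (β : ℂ) * (((c : ℝ) : ℂ) - (Real.sqrt (1 - c ^ 2) : ℂ) * Complex.I) := by
        push_cast; ring
end

section
/- Let α ∈ (0,1], let γ, β be real numbers with β < -|γ|, and set θ = α·π/2, Ω = γ·cos θ + √(β² - γ²·sin² θ), ω = Ω^(1/α) (real power), and τ* = arccos((Ω·cos θ - γ)/β)/ω. Then Ω > 0, ω > 0, and the complex identity (I·ω)^α = γ + β·exp(-I·ω·τ*) holds, where (I·ω)^α denotes the principal complex power (Complex.cpow). -/
/-- For the linear FDDE D^α x = γ x(t) + β x(t-τ) with β < -|γ|, the characteristic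
equation has the purely imaginary root i ω at the critical delay τ*. -/
theorem fdde_hopf_critical_delay (α γ β : ℝ)
    (hα0 : 0 < α) (hα1 : α ≤ 1) (hβ : β < -|γ|) :
    let θ := α * Real.pi / 2
    let Ω := γ * Real.cos θ + Real.sqrt (β ^ 2 - γ ^ 2 * Real.sin θ ^ 2)
    let ω := Ω ^ (1 / α)
    let τs := Real.arccos ((Ω * Real.cos θ - γ) / β) / ω
    0 < Ω ∧ 0 < ω ∧
      (Complex.I * (ω : ℂ)) ^ (α : ℂ) =
        (γ : ℂ) + (β : ℂ) * Complex.exp (-(Complex.I * (ω : ℂ)) * (τs : ℂ)) := by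
  intro θ Ω ω τs
  have hπ := Real.pi_pos
  have hθdef : θ = α * Real.pi / 2 := rfl
  have hΩdef : Ω = γ * Real.cos θ + Real.sqrt (β ^ 2 - γ ^ 2 * Real.sin θ ^ 2) := rfl
  have hωdef : ω = Ω ^ (1 / α) := rfl
  have hτdef : τs = Real.arccos ((Ω * Real.cos θ - γ) / β) / ω := rfl
  clear_value τs ω Ω θ
  have hθ0 : 0 < θ := by rw [hθdef]; positivity
  have hθle : θ ≤ Real.pi / 2 := by
    rw [hθdef]
    have : α * Real.pi ≤ 1 * Real.pi := by nlinarith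
    linarith
  have hsin : 0 < Real.sin θ :=
    Real.sin_pos_of_pos_of_lt_pi hθ0 (by linarith)
  have hcos : 0 ≤ Real.cos θ :=
    Real.cos_nonneg_of_mem_Icc ⟨by linarith, hθle⟩
  have hβneg : β < 0 := lt_of_lt_of_le hβ (by simp [abs_nonneg])
  have hβne : β ≠ 0 := hβneg.ne
  have hβ2 : γ ^ 2 < β ^ 2 := by nlinarith [sq_abs γ, abs_nonneg γ]
  have pyth := Real.sin_sq_add_cos_sq θ
  have hsin1 : Real.sin θ ^ 2 ≤ 1 := Real.sin_sq_le_one θ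
  have hD : 0 < β ^ 2 - γ ^ 2 * Real.sin θ ^ 2 := by nlinarith [sq_nonneg γ]
  obtain ⟨S, hSdef⟩ : ∃ S, S = Real.sqrt (β ^ 2 - γ ^ 2 * Real.sin θ ^ 2) := ⟨_, rfl⟩
  rw [← hSdef] at hΩdef
  have hS : S ^ 2 = β ^ 2 - γ ^ 2 * Real.sin θ ^ 2 := by rw [hSdef]; exact Real.sq_sqrt hD.le
  have hSnn : 0 ≤ S := hSdef ▸ Real.sqrt_nonneg _
  have hΩ : 0 < Ω := by
    by_contra h
    push_neg at h
    rw [hΩdef] at h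
    nlinarith [sq_nonneg (S + γ * Real.cos θ), sq_nonneg γ]
  have hω : 0 < ω := hωdef ▸ Real.rpow_pos_of_pos hΩ _
  have hωα : Real.exp (Real.log ω * α) = Ω := by
    rw [← Real.rpow_def_of_pos hω, hωdef,
      ← Real.rpow_mul hΩ.le, one_div, inv_mul_cancel₀ hα0.ne', Real.rpow_one]
  have hkey : Ω ^ 2 - 2 * γ * Real.cos θ * Ω + γ ^ 2 = β ^ 2 := by
    rw [hΩdef]
    linear_combination hS - γ ^ 2 * pyth
  obtain ⟨x, hxdef⟩ : ∃ x, x = Ω * Real.cos θ - γ := ⟨_, rfl⟩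
  have hx2 : x ^ 2 + (Ω * Real.sin θ) ^ 2 = β ^ 2 := by
    rw [hxdef]; linear_combination hkey + Ω ^ 2 * pyth
  have hxle : x ^ 2 ≤ β ^ 2 := by nlinarith [sq_nonneg (Ω * Real.sin θ)]
  have habsx : |x| ≤ -β := by
    have h := Real.sqrt_le_sqrt hxle
    rwa [Real.sqrt_sq_eq_abs, Real.sqrt_sq_eq_abs, abs_of_neg hβneg] at h
  obtain ⟨hxlo', hxhi⟩ := abs_le.mp habsx
  have hxlo : β ≤ x := by linarith
  obtain ⟨c, hcdef⟩ : ∃ c, c = x / β := ⟨_, rfl⟩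
  have hc1 : c ≤ 1 := by
    rw [hcdef, div_le_iff_of_neg hβneg]; linarith
  have hcm1 : -1 ≤ c := by
    rw [hcdef, le_div_iff_of_neg hβneg]; linarith
  obtain ⟨a, hadef⟩ : ∃ a, a = Real.arccos c := ⟨_, rfl⟩
  have hcos_a : Real.cos a = c := by rw [hadef]; exact Real.cos_arccos hcm1 hc1
  have hsin_a : Real.sin a = Ω * Real.sin θ / (-β) := by
    rw [hadef, Real.sin_arccos]
    rw [show (1 : ℝ) - c ^ 2 = (Ω * Real.sin θ / (-β)) ^ 2 by
      rw [hcdef]; field_simp; linear_combination -hx2]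
    exact Real.sqrt_sq (div_nonneg (by positivity) (by linarith))
  have h1 : Ω * Real.cos θ = γ + β * Real.cos a := by
    rw [hcos_a, hcdef]; field_simp [hβne]; linarith [hxdef]
  have h2 : Ω * Real.sin θ = -(β * Real.sin a) := by
    rw [hsin_a]; field_simp [hβne]
  have hωτ : ω * τs = a := by
    rw [hτdef]
    field_simp [hadef, hcdef, hxdef]
    rw [hadef, hcdef, hxdef]
  -- LHS computation
  have hz : Complex.I * (ω : ℂ) ≠ 0 :=
    mul_ne_zero Complex.I_ne_zero (by exact_mod_cast hω.ne')
  have habs : ‖Complex.I * (ω : ℂ)‖ = ω := by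
    simp [Complex.norm_real, abs_of_pos hω]
  have harg : (Complex.I * (ω : ℂ)).arg = Real.pi / 2 := by
    rw [mul_comm, Complex.arg_real_mul _ hω, Complex.arg_I]
  have hlog : Complex.log (Complex.I * (ω : ℂ)) =
      (Real.log ω : ℂ) + (Real.pi / 2 : ℝ) * Complex.I := by
    rw [Complex.log, habs, harg]
  have hLHS : (Complex.I * (ω : ℂ)) ^ (α : ℂ) =
      (Ω : ℂ) * Complex.exp ((θ : ℝ) * Complex.I) := by
    rw [Complex.cpow_def_of_ne_zero hz, hlog]
    rw [show ((Real.log ω : ℂ) + (Real.pi / 2 : ℝ) * Complex.I) * (α : ℂ) =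
        ((Real.log ω * α : ℝ) : ℂ) + ((θ : ℝ) : ℂ) * Complex.I by
      rw [hθdef]; push_cast; ring]
    rw [Complex.exp_add, ← Complex.ofReal_exp, hωα]
  have hRHS : -(Complex.I * (ω : ℂ)) * (τs : ℂ) = ((-a : ℝ) : ℂ) * Complex.I := by
    rw [← hωτ]; push_cast; ring
  refine ⟨hΩ, hω, ?_⟩
  rw [hLHS, hRHS, Complex.exp_mul_I, Complex.exp_mul_I]
  simp only [Complex.ofReal_neg, Complex.cos_neg, Complex.sin_neg,
    ← Complex.ofReal_cos, ← Complex.ofReal_sin]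
  have h1' : (Ω : ℂ) * (Real.cos θ : ℂ) = (γ : ℂ) + (β : ℂ) * (Real.cos a : ℂ) := by
    exact_mod_cast h1
  have h2' : (Ω : ℂ) * (Real.sin θ : ℂ) = -((β : ℂ) * (Real.sin a : ℂ)) := by
    exact_mod_cast h2
  linear_combination h1' + Complex.I * h2'
end

section
/- Let p, q, r be real numbers with 0 < p < q and 0 < r, define u = p if r ≤ 2 and u = p - q·(1 - 2/r) if r > 2, and let k be a real number with p - q < k < u. Then |((p-k) - q)·r·(p-k)/q + (p-k)| < p - k; equivalently, setting γ = -(p-k) and β = ((p-k) - q)·r·(p-k)/q + (p-k), one has γ < 0 and β ∈ (γ, -γ). -/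
/-- For the controlled Mackey–Glass equation, if p - q < k < u (where u = p for r ≤ 2
and u = p - q(1 - 2/r) for r > 2) then |β| < -γ with γ = -(p-k) and
β = ((p-k)-q) r (p-k)/q + (p-k). -/
theorem controlled_mackey_glass_beta_in_stable_range (p q r k : ℝ)
    (hp : 0 < p) (hpq : p < q) (hr : 0 < r)
    (hk1 : p - q < k) (hk2 : k < if r ≤ 2 then p else p - q * (1 - 2 / r)) :
    |((p - k) - q) * r * (p - k) / q + (p - k)| < p - k := by
  have hq : (0:ℝ) < q := hp.trans hpq
  set m := p - k with hm
  have hmq : m < q := by simp [hm]; linarith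
  -- m > 0 and m > q*(1 - 2/r)
  have hkey : q * (1 - 2 / r) < m ∧ 0 < m := by
    by_cases hrc : r ≤ 2
    · rw [if_pos hrc] at hk2
      have hm0 : 0 < m := by simp [hm]; linarith
      refine ⟨lt_of_le_of_lt ?_ hm0, hm0⟩
      have : 1 - 2 / r ≤ 0 := by
        have : (1:ℝ) ≤ 2 / r := (le_div_iff₀ hr).2 (by linarith)
        linarith
      nlinarith
    · rw [if_neg hrc] at hk2
      push_neg at hrc
      have h1 : q * (1 - 2 / r) < m := by simp [hm]; linarith
      refine ⟨h1, lt_of_le_of_lt ?_ h1⟩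
      have : 0 < 1 - 2 / r := by
        have : 2 / r < 1 := (div_lt_one hr).2 hrc
        linarith
      positivity
  obtain ⟨h1, h2⟩ := hkey
  rw [abs_lt]
  set t := (m - q) * r * m / q with ht
  have htq : t * q = (m - q) * r * m := by rw [ht, div_mul_cancel₀ _ hq.ne']
  have hdr : q * (1 - 2 / r) * r = q * r - 2 * q := by field_simp
  constructor
  · -- -m < t + m ⟺ t > -2m ⟺ (m-q)*r*m > -2mq ⟺ m((m-q)r + 2q) > 0
    have h3 : q * r - 2 * q < m * r := by
      have := mul_lt_mul_of_pos_right h1 hr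
      rw [hdr] at this; linarith
    nlinarith [mul_pos h2 (show (0:ℝ) < m * r - (q * r - 2 * q) by linarith)]
  · nlinarith [mul_pos (mul_pos (show (0:ℝ) < q - m by linarith) hr) h2]
end

section
/- Let α ∈ (0,1], let p, q, r be real numbers with 0 < p < q and 0 < r, define u = p if r ≤ 2 and u = p - q·(1 - 2/r) if r > 2, let k be real with p - q < k < u, and set β = ((p-k) - q)·r·(p-k)/q + (p-k). Then for every τ ≥ 0 and every complex λ with Re λ ≥ 0 one has λ^α ≠ -(p-k) + β·exp(-λ·τ), where λ^α denotes the principal complex power (Complex.cpow). Hence the characteristic equation of the controlled fractional Mackey–Glass equation linearized at its positive equilibrium has no root with nonnegative real part for any delay, so the chaos is controlled. -/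
/-- The characteristic equation of the controlled fractional Mackey–Glass equation
linearized at its positive equilibrium has no root with nonnegative real part for
any delay, when the control k lies in (p - q, u). -/
theorem controlled_fractional_mackey_glass_stable (α p q r k : ℝ)
    (hα0 : 0 < α) (hα1 : α ≤ 1) (hp : 0 < p) (hpq : p < q) (hr : 0 < r)
    (hk1 : p - q < k) (hk2 : k < if r ≤ 2 then p else p - q * (1 - 2 / r)) :
    ∀ τ : ℝ, 0 ≤ τ → ∀ lam : ℂ, 0 ≤ lam.re →
      lam ^ (α : ℂ) ≠ (-(p - k) : ℂ) +
        ((((p - k) - q) * r * (p - k) / q + (p - k) : ℝ) : ℂ) *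
          Complex.exp (-lam * (τ : ℂ)) := by
  intro τ hτ lam hre h
  have hq0 : 0 < q := lt_trans hp hpq
  set a : ℝ := p - k with ha
  -- basic inequalities about a
  have ha0 : 0 < a := by
    by_cases h2 : r ≤ 2
    · rw [if_pos h2] at hk2; simp only [ha]; linarith
    · rw [if_neg h2] at hk2
      push_neg at h2
      have h1 : 2 / r < 1 := (div_lt_one (by linarith)).mpr (by linarith)
      have : 0 < q * (1 - 2 / r) := mul_pos hq0 (by linarith)
      simp only [ha]; linarith
  have haq : a < q := by simp only [ha]; linarith
  have hkey : q * (r - 2) < r * a := by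
    by_cases h2 : r ≤ 2
    · nlinarith [mul_pos hr ha0, mul_nonneg hq0.le (show (0:ℝ) ≤ 2 - r by linarith)]
    · rw [if_neg h2] at hk2
      push_neg at h2
      have hra : q * (1 - 2 / r) < a := by simp only [ha]; linarith
      have : r * (q * (1 - 2 / r)) < r * a := by
        exact mul_lt_mul_of_pos_left hra hr
      have hrr : r ≠ 0 := by linarith
      calc q * (r - 2) = r * (q * (1 - 2 / r)) := by field_simp
        _ < r * a := this
  set b : ℝ := (a - q) * r * a / q + a with hb
  have hb1 : b < a := by
    have hnum : (a - q) * r * a < 0 := by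
      nlinarith [mul_neg_of_neg_of_pos (show a - q < 0 by linarith) (mul_pos hr ha0)]
    have : (a - q) * r * a / q < 0 := div_neg_of_neg_of_pos hnum hq0
    simp only [hb]; linarith
  have hb2 : -a < b := by
    have hnum : -(2 * a) * q < (a - q) * r * a := by nlinarith
    have : -(2 * a) < (a - q) * r * a / q := (lt_div_iff₀ hq0).mpr hnum
    simp only [hb]; linarith
  have habs : |b| < a := abs_lt.mpr ⟨hb2, hb1⟩
  -- LHS real part is nonnegative
  have hlhs : 0 ≤ (lam ^ (α : ℂ)).re := by
    rcases eq_or_ne lam 0 with rfl | hl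
    · rw [Complex.zero_cpow (by exact_mod_cast hα0.ne')]; simp
    · rw [Complex.cpow_def_of_ne_zero hl, Complex.exp_re]
      apply mul_nonneg (Real.exp_nonneg _)
      have him : (Complex.log lam * (α : ℂ)).im = α * lam.arg := by
        simp [Complex.mul_im, Complex.log_im]
        ring
      rw [him]
      apply Real.cos_nonneg_of_mem_Icc
      have harg := abs_le.mp (Complex.abs_arg_le_pi_div_two_iff.mpr hre)
      have hpi := Real.pi_pos
      constructor
      · nlinarith [harg.1, harg.2]
      · nlinarith [harg.1, harg.2]
  -- RHS real part is negative
  have hE : |(Complex.exp (-lam * (τ : ℂ))).re| ≤ 1 := by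
    calc |(Complex.exp (-lam * (τ : ℂ))).re|
        ≤ ‖Complex.exp (-lam * (τ : ℂ))‖ := Complex.abs_re_le_norm _
      _ = Real.exp ((-lam * (τ : ℂ)).re) := Complex.norm_exp _
      _ ≤ 1 := by
          rw [Real.exp_le_one_iff]
          have : (-lam * (τ : ℂ)).re = -(lam.re * τ) := by
            simp [Complex.mul_re]
          rw [this]
          have := mul_nonneg hre hτ
          linarith
  have hbE : b * (Complex.exp (-lam * (τ : ℂ))).re < a := by
    calc b * (Complex.exp (-lam * (τ : ℂ))).re
        ≤ |b * (Complex.exp (-lam * (τ : ℂ))).re| := le_abs_self _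
      _ = |b| * |(Complex.exp (-lam * (τ : ℂ))).re| := abs_mul _ _
      _ ≤ |b| * 1 := by
          exact mul_le_mul_of_nonneg_left hE (abs_nonneg _)
      _ < a := by rw [mul_one]; exact habs
  have hre_eq := congrArg Complex.re h
  simp only [Complex.add_re, Complex.neg_re, Complex.sub_re, Complex.ofReal_re,
    Complex.mul_re, Complex.ofReal_im, zero_mul, sub_zero] at hre_eq
  -- hre_eq : (lam ^ α).re = -(p - k) + b * (exp (-lam*τ)).re
  have : (lam ^ (α : ℂ)).re < 0 := by
    rw [hre_eq]
    simp only [← ha, ← hb]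
    linarith
  linarith
end

section
/- Let α ∈ (0,1], let d > 0, let p, q be real numbers with 0 < p < q, and let τ ≥ 0. Then there exists a real λ > 0 such that (α - 1/2)·λ^α + d·λ^(2α) = -p + q·exp(-λ·τ), where λ^α and λ^(2α) denote real powers (rpow). Consequently the characteristic equation of the generalized Mackey–Glass equation linearized at the equilibrium x₁* = 0 has a real positive root for every delay, so x₁* is unstable for all τ ≥ 0. -/
/-- The characteristic equation (α - 1/2)λ^α + d λ^{2α} = -p + q e^{-λτ} of the
generalized Mackey–Glass equation linearized at x₁* = 0 has a real positive root
for every delay τ ≥ 0. -/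
theorem generalized_mackey_glass_zero_equilibrium_unstable (α d p q τ : ℝ)
    (hα0 : 0 < α) (hα1 : α ≤ 1) (hd : 0 < d) (hp : 0 < p) (hpq : p < q) (hτ : 0 ≤ τ) :
    ∃ lam : ℝ, 0 < lam ∧
      (α - 1 / 2) * lam ^ α + d * lam ^ (2 * α) = -p + q * Real.exp (-lam * τ) := by
  set f : ℝ → ℝ := fun x => (α - 1 / 2) * x ^ α + d * x ^ (2 * α) + p - q * Real.exp (-x * τ)
    with hf
  have hcont : Continuous f := by
    have h1 : Continuous fun x : ℝ => x ^ α := by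
      rw [continuous_iff_continuousAt]
      exact fun x => Real.continuousAt_rpow_const x α (Or.inr hα0.le)
    have h2 : Continuous fun x : ℝ => x ^ (2 * α) := by
      rw [continuous_iff_continuousAt]
      exact fun x => Real.continuousAt_rpow_const x (2 * α) (Or.inr (by linarith : (0:ℝ) ≤ 2 * α))
    continuity
  -- choose t and M
  set t : ℝ := max 1 ((1 / 2 + q) / d) with htdef
  have ht1 : (1 : ℝ) ≤ t := le_max_left _ _
  have ht0 : (0 : ℝ) < t := lt_of_lt_of_le one_pos ht1
  have htd : 1 / 2 + q ≤ d * t := by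
    have := le_max_right 1 ((1 / 2 + q) / d)
    calc 1 / 2 + q = d * ((1 / 2 + q) / d) := by field_simp
    _ ≤ d * t := by
      apply mul_le_mul_of_nonneg_left _ hd.le
      exact this
  set M : ℝ := t ^ (α⁻¹ : ℝ) with hMdef
  have hM0 : 0 < M := Real.rpow_pos_of_pos ht0 _
  have hMα : M ^ α = t := Real.rpow_inv_rpow ht0.le (ne_of_gt hα0)
  have hM2α : M ^ (2 * α) = t ^ 2 := by
    rw [show (2 : ℝ) * α = α * 2 by ring, Real.rpow_mul hM0.le, hMα,
      show ((2 : ℝ) : ℝ) = ((2 : ℕ) : ℝ) by norm_num, Real.rpow_natCast]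
  have hf0 : f 0 < 0 := by
    simp only [hf, Real.zero_rpow (ne_of_gt hα0),
      Real.zero_rpow (by positivity : (2 : ℝ) * α ≠ 0), neg_zero, zero_mul, Real.exp_zero]
    linarith
  have hexp : Real.exp (-M * τ) ≤ 1 := by
    rw [Real.exp_le_one_iff]
    nlinarith
  have hfM : 0 ≤ f M := by
    simp only [hf, hMα, hM2α]
    nlinarith [sq_nonneg t, mul_le_mul_of_nonneg_right htd (by linarith : (0:ℝ) ≤ t - 1),
      mul_le_mul_of_nonneg_left hexp (le_of_lt (lt_trans hp hpq))]
  obtain ⟨c, hc, hfc⟩ := intermediate_value_Icc hM0.le hcont.continuousOn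
    (Set.mem_Icc.mpr ⟨hf0.le, hfM⟩)
  refine ⟨c, ?_, by simp only [hf] at hfc; linarith⟩
  rcases eq_or_lt_of_le hc.1 with h | h
  · exfalso; rw [← h] at hfc; linarith
  · exact h
end
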